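/- arXiv:2205.15397 — 2 statements merged into one kernel-verified Lean document; each statement's English description precedes it below -/
import Mathlib

section
/- Let U be uniformly distributed on the unit hemisphere H = {x ∈ S^{d-1} : ⟨x, θ⟩ ≥ 0} for a fixed unit vector θ ∈ ℝ^d. Then for any η ≥ 0, Pr(⟨U, θ⟩ ≤ η) ≤ 2√d · η. -/
/-!
Blow the sphere up to the unit ball: `toSphere` gives a set `s` of directions the mass
`d · vol (Ioo 0 1 • s)`. The cone over the band `0 ≤ ⟪x, θ⟫ ≤ η` lies in a slab of width `η` whose
sections orthogonal to `θ` are `(d-1)`-balls, so the band has mass at most `d η V_{d-1}`; the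
hemisphere has mass at least half of `d V_d` because `x ↦ -x` maps it onto the complementary
hemisphere. Finally `V_{d-1} ≤ √d V_d`, which comes from the log-convexity bound
`Γ(a + 1/2) ≤ √a Γ(a)`.
-/

open MeasureTheory ProbabilityTheory RealInnerProductSpace Set Metric Real Module
open scoped Pointwise ENNReal

theorem Real.Gamma_add_half_le_sqrt_mul_Gamma {a : ℝ} (ha : 0 < a) :
    Gamma (a + 1 / 2) ≤ √a * Gamma a := by
  calc Gamma (a + 1 / 2) = Gamma (1 / 2 * a + 1 / 2 * (a + 1)) := by ring_nf
    _ ≤ Gamma a ^ (1 / 2 : ℝ) * Gamma (a + 1) ^ (1 / 2 : ℝ) :=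
      Gamma_mul_add_mul_le_rpow_Gamma_mul_rpow_Gamma ha (by linarith) (by norm_num) (by norm_num)
        (by norm_num)
    _ = √(Gamma a * (a * Gamma a)) := by
      rw [Gamma_add_one ha.ne', sqrt_eq_rpow, mul_rpow (Gamma_pos_of_pos ha).le (by positivity)]
    _ = √a * Gamma a := by
      rw [mul_left_comm, ← sq, sqrt_mul ha.le, sqrt_sq (Gamma_pos_of_pos ha).le]

theorem EuclideanSpace.volume_ball_zero_one (ι : Type*) [Fintype ι] :
    volume (ball (0 : EuclideanSpace ℝ ι) 1) =
      .ofReal (√π ^ Fintype.card ι / Gamma (Fintype.card ι / 2 + 1)) := by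
  cases isEmpty_or_nonempty ι
  · rw [← (PiLp.volume_preserving_toLp ι).measure_preimage measurableSet_ball.nullMeasurableSet,
      show (WithLp.toLp 2 : (ι → ℝ) → _) ⁻¹' ball 0 1 = univ from
        eq_univ_of_forall fun x => by simp [Subsingleton.elim (WithLp.toLp 2 x) 0]]
    simp [volume_pi]
  · simp [EuclideanSpace.volume_ball]

theorem volume_ball_le_sqrt_mul_volume_ball_succ (m : ℕ) :
    volume (ball (0 : EuclideanSpace ℝ (Fin m)) 1) ≤
      .ofReal √(m + 1) * volume (ball (0 : EuclideanSpace ℝ (Fin (m + 1))) 1) := by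
  simp only [EuclideanSpace.volume_ball_zero_one, Fintype.card_fin]
  have hΓ : 0 < Gamma (m / 2 + 1) := Gamma_pos_of_pos (by positivity)
  have hstep : Gamma ((m + 1 : ℕ) / 2 + 1) ≤ √(m + 1) * Gamma (m / 2 + 1) := calc
    Gamma ((m + 1 : ℕ) / 2 + 1) = Gamma ((m / 2 + 1) + 1 / 2) := by push_cast; ring_nf
    _ ≤ √(m / 2 + 1) * Gamma (m / 2 + 1) := Gamma_add_half_le_sqrt_mul_Gamma (by positivity)
    _ ≤ √(m + 1) * Gamma (m / 2 + 1) := by gcongr; linarith [m.cast_nonneg (α := ℝ)]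
  have hπ : 1 ≤ √π := one_le_sqrt.mpr (by linarith [pi_gt_three])
  rw [← ENNReal.ofReal_mul (sqrt_nonneg _)]
  apply ENNReal.ofReal_le_ofReal
  rw [mul_div_assoc', div_le_div_iff₀ hΓ (Gamma_pos_of_pos (by positivity)), pow_succ]
  calc √π ^ m * Gamma ((m + 1 : ℕ) / 2 + 1) ≤ √π ^ m * (√(m + 1) * Gamma (m / 2 + 1)) := by
        gcongr
    _ ≤ √π ^ m * (√(m + 1) * Gamma (m / 2 + 1)) * √π :=
        le_mul_of_one_le_right (by positivity) hπ
    _ = √(m + 1) * (√π ^ m * √π) * Gamma (m / 2 + 1) := by ring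

theorem EuclideanSpace.norm_toLp_removeNth_le {𝕜 : Type*} [RCLike 𝕜] {m : ℕ}
    (x : EuclideanSpace 𝕜 (Fin (m + 1))) (i : Fin (m + 1)) :
    ‖WithLp.toLp 2 (Fin.removeNth i x.ofLp)‖ ≤ ‖x‖ := by
  rw [← sq_le_sq₀ (norm_nonneg _) (norm_nonneg _), EuclideanSpace.norm_sq_eq,
    EuclideanSpace.norm_sq_eq, Fin.sum_univ_succAbove _ i]
  exact le_add_of_nonneg_left (by positivity)

variable {E : Type*} [NormedAddCommGroup E] [InnerProductSpace ℝ E] [FiniteDimensional ℝ E]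

theorem OrthonormalBasis.exists_apply_zero_eq {m : ℕ} (hE : finrank ℝ E = m + 1) {θ : E}
    (hθ : ‖θ‖ = 1) : ∃ b : OrthonormalBasis (Fin (m + 1)) ℝ E, b 0 = θ := by
  have hθ' : Orthonormal ℝ (({0} : Set (Fin (m + 1))).domRestrict fun _ => θ) :=
    ⟨fun _ => hθ, fun i j hij => absurd (Subsingleton.elim i j) hij⟩
  obtain ⟨b, hb⟩ := hθ'.exists_orthonormalBasis_extension_of_card_eq (by simpa using hE)
  exact ⟨b, hb 0 rfl⟩

variable [MeasurableSpace E] [BorelSpace E]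

theorem volume_ball_inter_setOf_inner_mem_Icc_le {m : ℕ} (hE : finrank ℝ E = m + 1) {θ : E} (hθ : ‖θ‖ = 1)
    (η : ℝ) :
    volume {y ∈ ball (0 : E) 1 | ⟪y, θ⟫ ∈ Icc 0 η} ≤
      .ofReal η * volume (ball (0 : EuclideanSpace ℝ (Fin m)) 1) := by
  obtain ⟨b, hb⟩ := OrthonormalBasis.exists_apply_zero_eq hE hθ
  let e := MeasurableEquiv.piFinSuccAbove (fun _ : Fin (m + 1) => ℝ) 0
  have he : MeasurePreserving (fun y : E => e (b.repr y).ofLp) :=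
    (volume_preserving_piFinSuccAbove _ 0).comp
      ((PiLp.volume_preserving_ofLp _).comp b.measurePreserving_repr)
  have hsub : {y ∈ ball (0 : E) 1 | ⟪y, θ⟫ ∈ Icc 0 η} ⊆
      (fun y => e (b.repr y).ofLp) ⁻¹' (Icc 0 η ×ˢ (WithLp.toLp 2 ⁻¹' ball 0 1)) := by
    rintro y ⟨hy, hyθ⟩
    refine ⟨by simpa [e, b.repr_apply_apply, hb, real_inner_comm] using hyθ, ?_⟩
    have := EuclideanSpace.norm_toLp_removeNth_le (b.repr y) 0
    simp only [mem_ball_zero_iff, LinearIsometryEquiv.norm_map] at hy this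
    simpa [e] using this.trans_lt hy
  calc _ ≤ _ := measure_mono hsub
    _ = _ := by
      rw [he.measure_preimage (measurableSet_Icc.prod
          (measurableSet_ball.preimage (by fun_prop))).nullMeasurableSet,
        Measure.volume_eq_prod, Measure.prod_prod, Real.volume_Icc, sub_zero,
        (PiLp.volume_preserving_toLp _).measure_preimage measurableSet_ball.nullMeasurableSet]

theorem MeasureTheory.Measure.toSphere_neg {F : Type*} [NormedAddCommGroup F] [NormedSpace ℝ F]
    [MeasurableSpace F] [BorelSpace F] (μ : Measure F) [μ.IsNegInvariant]
    {s : Set (sphere (0 : F) 1)} (hs : MeasurableSet s) : μ.toSphere (-s) = μ.toSphere s := by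
  have himage : ((↑) : sphere (0 : F) 1 → F) '' (-s) = -((↑) '' s) :=
    image_neg_of_apply_neg_eq_neg fun x _ => coe_neg_sphere x
  rw [μ.toSphere_apply' hs.neg, μ.toSphere_apply' hs, himage, Set.smul_neg, measure_neg]

theorem toSphere_univ_le_two_mul_toSphere_setOf_inner_nonneg (θ : E) :
    (volume : Measure E).toSphere univ ≤
      2 * (volume : Measure E).toSphere {x : sphere (0 : E) 1 | 0 ≤ ⟪(x : E), θ⟫} := by
  set H := {x : sphere (0 : E) 1 | 0 ≤ ⟪(x : E), θ⟫}
  have hH : MeasurableSet H := measurableSet_le measurable_const (by fun_prop)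
  have hcover : univ ⊆ H ∪ -H := fun x _ => by
    rcases le_total 0 ⟪(x : E), θ⟫ with h | h
    · exact Or.inl h
    · exact Or.inr (by simpa [H, inner_neg_left] using h)
  calc _ ≤ volume.toSphere (H ∪ -H) := measure_mono hcover
    _ ≤ volume.toSphere H + volume.toSphere (-H) := measure_union_le _ _
    _ = 2 * volume.toSphere H := by rw [Measure.toSphere_neg _ hH, two_mul]

theorem toSphere_setOf_inner_mem_Icc_le {m : ℕ} (hE : finrank ℝ E = m + 1) {θ : E} (hθ : ‖θ‖ = 1)
    (η : ℝ) :
    (volume : Measure E).toSphere {x : sphere (0 : E) 1 | ⟪(x : E), θ⟫ ∈ Icc 0 η} ≤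
      (m + 1) * (.ofReal η * volume (ball (0 : EuclideanSpace ℝ (Fin m)) 1)) := by
  have hcone : Ioo (0 : ℝ) 1 • ((↑) '' {x : sphere (0 : E) 1 | ⟪(x : E), θ⟫ ∈ Icc 0 η}) ⊆
      {y ∈ ball (0 : E) 1 | ⟪y, θ⟫ ∈ Icc 0 η} := by
    rintro _ ⟨r, ⟨hr0, hr1⟩, _, ⟨x, ⟨hx0, hxη⟩, rfl⟩, rfl⟩
    refine ⟨by simpa [norm_smul, abs_of_pos hr0] using hr1, ?_, ?_⟩
    · simpa [real_inner_smul_left] using mul_nonneg hr0.le hx0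
    · simp only [real_inner_smul_left]
      nlinarith
  have hmeas : MeasurableSet {x : sphere (0 : E) 1 | ⟪(x : E), θ⟫ ∈ Icc 0 η} :=
    measurableSet_Icc.preimage (by fun_prop)
  rw [Measure.toSphere_apply' _ hmeas, hE]
  push_cast
  gcongr
  exact (measure_mono hcone).trans (volume_ball_inter_setOf_inner_mem_Icc_le hE hθ η)

theorem hemisphere_band_measure_le_general (d : ℕ)
    (θ : EuclideanSpace ℝ (Fin d)) (hθ : ‖θ‖ = 1) (η : ℝ) :
    ((volume : Measure (EuclideanSpace ℝ (Fin d))).toSphere[|{x : Metric.sphere (0 : EuclideanSpace ℝ (Fin d)) 1 |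
            0 ≤ ⟪(x : EuclideanSpace ℝ (Fin d)), θ⟫}])
      {x : Metric.sphere (0 : EuclideanSpace ℝ (Fin d)) 1 |
          ⟪(x : EuclideanSpace ℝ (Fin d)), θ⟫ ≤ η}
      ≤ ENNReal.ofReal (2 * Real.sqrt d * η) := by
  obtain ⟨m, rfl⟩ : ∃ m, d = m + 1 := Nat.exists_eq_succ_of_ne_zero fun hd => by
    subst hd; simp [Subsingleton.elim θ 0] at hθ
  have hE : finrank ℝ (EuclideanSpace ℝ (Fin (m + 1))) = m + 1 := finrank_euclideanSpace_fin
  set μ := (volume : Measure (EuclideanSpace ℝ (Fin (m + 1)))).toSphere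
  set H := {x : sphere (0 : EuclideanSpace ℝ (Fin (m + 1))) 1 |
    0 ≤ ⟪(x : EuclideanSpace ℝ (Fin (m + 1))), θ⟫}
  have hhalf : μ univ ≤ 2 * μ H := toSphere_univ_le_two_mul_toSphere_setOf_inner_nonneg θ
  have hH : μ H ≠ 0 := by
    have : μ univ ≠ 0 := Measure.measure_univ_ne_zero.mpr <| by
      rw [Ne, Measure.toSphere_eq_zero_iff_finrank, hE]; omega
    contrapose! this
    simpa [this] using hhalf
  rw [cond_apply (measurableSet_le measurable_const (by fun_prop)),
    ENNReal.inv_mul_le_iff hH (measure_ne_top _ _)]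
  calc μ (H ∩ _) ≤ (m + 1) * (.ofReal η * volume (ball (0 : EuclideanSpace ℝ (Fin m)) 1)) :=
        toSphere_setOf_inner_mem_Icc_le hE hθ η
    _ ≤ (m + 1) * (.ofReal η * (.ofReal √(m + 1) *
          volume (ball (0 : EuclideanSpace ℝ (Fin (m + 1))) 1))) := by
        gcongr; exact volume_ball_le_sqrt_mul_volume_ball_succ m
    _ = .ofReal (√(m + 1)) * .ofReal η * μ univ := by
        rw [Measure.toSphere_apply_univ, hE]; push_cast; ring
    _ ≤ .ofReal (√(m + 1)) * .ofReal η * (2 * μ H) := by gcongr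
    _ = μ H * .ofReal (2 * √(m + 1 : ℕ) * η) := by
        rw [ENNReal.ofReal_mul (by positivity), ENNReal.ofReal_mul (by positivity),
          ENNReal.ofReal_ofNat]
        push_cast; ring

/-- Let `U` be uniformly distributed on the unit hemisphere
`{x ∈ S^{d-1} : ⟨x, θ⟩ ≥ 0}` for a fixed unit vector `θ ∈ ℝ^d` (the uniform
distribution being the surface measure conditioned on the hemisphere).  Then for
any `η ≥ 0`, `Pr(⟨U, θ⟩ ≤ η) ≤ 2√d · η`. -/
theorem hemisphere_band_measure_le (d : ℕ)
    (θ : EuclideanSpace ℝ (Fin d)) (hθ : ‖θ‖ = 1) (η : ℝ) (hη : 0 ≤ η) :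
    ((volume : Measure (EuclideanSpace ℝ (Fin d))).toSphere[|{x : Metric.sphere (0 : EuclideanSpace ℝ (Fin d)) 1 |
            0 ≤ ⟪(x : EuclideanSpace ℝ (Fin d)), θ⟫}])
      {x : Metric.sphere (0 : EuclideanSpace ℝ (Fin d)) 1 |
          ⟪(x : EuclideanSpace ℝ (Fin d)), θ⟫ ≤ η}
      ≤ ENNReal.ofReal (2 * Real.sqrt d * η) :=
  hemisphere_band_measure_le_general d θ hθ η
end

section
/- Let X ~ Bin(n, q) with nq an integer. Then Pr(X ≤ nq) ≥ 1/2. -/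
/-!
Write `b k x` for the Bernstein polynomial `(n choose k) x^k (1 - x)^(n - k)`, so that the
probability in question is `∑_{k ≤ m} b k p` with `p = m / n`.

If `p ≥ 1/2`, every term above the mean is dominated by its mirror image below it,
`b (m + 1 + i) p ≤ b (m - i) p`: passing from `i` to `i + 1` multiplies the two sides by ratios of
consecutive terms, and with `np = m` the ratio on the left is the smaller one.

If `p ≤ 1/2`, the sum telescopes when differentiated in `x`, giving
`∑_{k ≤ m} b k x = n ∫_x^1 f` with `f` the Bernstein polynomial of degree `n - 1` and index `m`,
and `n ∫_0^1 f = 1`. The claim is then that `f` has no more mass on `[0, p]` than on `[p, 1]`.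
Reflecting about `p` (possible since `2p ≤ 1`), this follows from `f (p - v) ≤ f (p + v)`, which
holds because the logarithm of `f (p + v) / f (p - v)` is nondecreasing in `v`.
-/

open Polynomial Finset

theorem sub_pow_mul_add_pow_le_add_pow_mul_sub_pow {a b : ℕ} {c d v : ℝ} (hv : 0 ≤ v)
    (hvc : v < c) (hcd : c ≤ d) (hbc : b * c ≤ a * d) :
    (c - v) ^ a * (d + v) ^ b ≤ (c + v) ^ a * (d - v) ^ b := by
  set φ : ℝ → ℝ := fun t =>
    a * (Real.log (c + t) - Real.log (c - t)) - b * (Real.log (d + t) - Real.log (d - t))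
  set φ' : ℝ → ℝ := fun t => 2 * a * c / (c ^ 2 - t ^ 2) - 2 * b * d / (d ^ 2 - t ^ 2)
  have hpos : ∀ t ∈ Set.Icc 0 v, 0 < c + t ∧ 0 < c - t ∧ 0 < d + t ∧ 0 < d - t := by
    intro t ht
    refine ⟨?_, ?_, ?_, ?_⟩ <;> linarith [ht.1, ht.2]
  have hderiv : ∀ t ∈ Set.Icc 0 v, HasDerivAt φ (φ' t) t := by
    intro t ht
    obtain ⟨h₁, h₂, h₃, h₄⟩ := hpos t ht
    have hc := (((hasDerivAt_id t).const_add c).log h₁.ne').sub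
      (((hasDerivAt_id t).const_sub c).log h₂.ne')
    have hd := (((hasDerivAt_id t).const_add d).log h₃.ne').sub
      (((hasDerivAt_id t).const_sub d).log h₄.ne')
    refine ((hc.const_mul (a : ℝ)).sub (hd.const_mul (b : ℝ))).congr_deriv ?_
    simp only [φ', id]
    rw [show c ^ 2 - t ^ 2 = (c + t) * (c - t) by ring,
      show d ^ 2 - t ^ 2 = (d + t) * (d - t) by ring]
    field_simp
    ring
  have hφ' : ∀ t ∈ Set.Icc 0 v, 0 ≤ φ' t := by
    intro t ht
    obtain ⟨h₁, h₂, h₃, h₄⟩ := hpos t ht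
    have hc : 0 < c := by linarith [ht.1]
    have hd : 0 < d := by linarith
    have hct : 0 < c ^ 2 - t ^ 2 := by nlinarith
    have hdt : 0 < d ^ 2 - t ^ 2 := by nlinarith
    have key : c * (b * d * (c ^ 2 - t ^ 2)) ≤ c * (a * c * (d ^ 2 - t ^ 2)) :=
      calc c * (b * d * (c ^ 2 - t ^ 2))
          = b * c * (d * (c ^ 2 - t ^ 2)) := by ring
        _ ≤ a * d * (d * (c ^ 2 - t ^ 2)) := mul_le_mul_of_nonneg_right hbc (by positivity)
        _ ≤ c * (a * c * (d ^ 2 - t ^ 2)) := by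
          have : d ^ 2 * (c ^ 2 - t ^ 2) ≤ c ^ 2 * (d ^ 2 - t ^ 2) := by
            nlinarith [mul_le_mul_of_nonneg_right (pow_le_pow_left₀ hc.le hcd 2) (sq_nonneg t)]
          nlinarith [Nat.cast_nonneg (α := ℝ) a]
    simp only [φ', sub_nonneg]
    rw [div_le_div_iff₀ hdt hct]
    nlinarith [le_of_mul_le_mul_left key hc]
  have hmono : MonotoneOn φ (Set.Icc 0 v) :=
    monotoneOn_of_hasDerivWithinAt_nonneg (convex_Icc 0 v)
      (fun t ht => (hderiv t ht).continuousAt.continuousWithinAt)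
      (fun t ht => (hderiv t (interior_subset ht)).hasDerivWithinAt)
      (fun t ht => hφ' t (interior_subset ht))
  have hφv : φ 0 ≤ φ v := hmono ⟨le_rfl, hv⟩ ⟨hv, le_rfl⟩ hv
  obtain ⟨h₁, h₂, h₃, h₄⟩ := hpos v ⟨hv, le_rfl⟩
  rw [← Real.log_le_log_iff (by positivity) (by positivity), Real.log_mul (by positivity)
    (by positivity), Real.log_mul (by positivity) (by positivity), Real.log_pow, Real.log_pow,
    Real.log_pow, Real.log_pow]
  simp only [φ, add_zero, sub_zero, sub_self, mul_zero] at hφv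
  linarith

theorem integral_le_integral_of_le_reflect {f : ℝ → ℝ} {a b c : ℝ} (hf : Continuous f)
    (hac : a ≤ c) (hb : 2 * c - a ≤ b) (hle : ∀ u ∈ Set.Ioo a c, f u ≤ f (2 * c - u))
    (hnonneg : ∀ u ∈ Set.Icc (2 * c - a) b, 0 ≤ f u) :
    ∫ u in a..c, f u ≤ ∫ u in c..b, f u :=
  calc ∫ u in a..c, f u
      ≤ ∫ u in a..c, f (2 * c - u) :=
        intervalIntegral.integral_mono_on_of_le_Ioo hac (hf.intervalIntegrable _ _)
          ((hf.comp (continuous_sub_left _)).intervalIntegrable _ _) hle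
    _ = ∫ u in c..2 * c - a, f u := by
        rw [intervalIntegral.integral_comp_sub_left, show 2 * c - c = c by ring]
    _ ≤ (∫ u in c..2 * c - a, f u) + ∫ u in 2 * c - a..b, f u :=
        le_add_of_nonneg_right (intervalIntegral.integral_nonneg hb hnonneg)
    _ = ∫ u in c..b, f u :=
        intervalIntegral.integral_add_adjacent_intervals (hf.intervalIntegrable _ _)
          (hf.intervalIntegrable _ _)

namespace bernsteinPolynomial

theorem derivative_sum_range (R : Type*) [CommRing R] (n m : ℕ) :
    derivative (∑ k ∈ range (m + 1), bernsteinPolynomial R n k) =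
      -n * bernsteinPolynomial R (n - 1) m := by
  induction m with
  | zero => simp [derivative_zero]
  | succ m ih =>
    rw [sum_range_succ, derivative_add, ih, derivative_succ]
    ring

theorem eval_sum_range_sub_eval (n m : ℕ) (a b : ℝ) :
    (∑ k ∈ range (m + 1), bernsteinPolynomial ℝ n k).eval b -
        (∑ k ∈ range (m + 1), bernsteinPolynomial ℝ n k).eval a =
      -n * ∫ t in a..b, (bernsteinPolynomial ℝ (n - 1) m).eval t := by
  rw [← intervalIntegral.integral_const_mul, ← intervalIntegral.integral_eq_sub_of_hasDerivAt
    (fun x _ => Polynomial.hasDerivAt _ x) ((Polynomial.continuous _).intervalIntegrable _ _),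
    derivative_sum_range]
  simp

theorem eval_zero_sum_range (R : Type*) [CommRing R] (n m : ℕ) :
    (∑ k ∈ range (m + 1), bernsteinPolynomial R n k).eval 0 = 1 := by
  simp [eval_finsetSum, eval_at_0]

theorem eval_one_sum_range (R : Type*) [CommRing R] {n m : ℕ} (h : m < n) :
    (∑ k ∈ range (m + 1), bernsteinPolynomial R n k).eval 1 = 0 := by
  rw [eval_finsetSum]
  refine sum_eq_zero fun k hk => ?_
  rw [eval_at_1, if_neg (by rw [Finset.mem_range] at hk; omega)]

theorem eval_nonneg {n k : ℕ} {t : ℝ} (h0 : 0 ≤ t) (h1 : t ≤ 1) :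
    0 ≤ (bernsteinPolynomial ℝ n k).eval t := by
  have : 0 ≤ 1 - t := by linarith
  simp only [bernsteinPolynomial, eval_mul, eval_pow, eval_sub, eval_one, eval_X, eval_natCast]
  positivity

theorem eval_le_eval_two_mul_sub {N m : ℕ} {p u : ℝ} (h : 2 * m ≤ N + 1)
    (hp : (N + 1) * p = m) (hu : u ∈ Set.Ioo 0 p) :
    (bernsteinPolynomial ℝ N m).eval u ≤ (bernsteinPolynomial ℝ N m).eval (2 * p - u) := by
  obtain ⟨v, rfl⟩ : ∃ v, u = p - v := ⟨p - u, by ring⟩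
  obtain ⟨hv0, hvp⟩ : 0 < v ∧ v < p := by constructor <;> linarith [hu.1, hu.2]
  have h2p : 2 * p ≤ 1 := by
    have : (2 * m : ℝ) ≤ N + 1 := by exact_mod_cast h
    nlinarith
  have hbc : ((N - m : ℕ) : ℝ) * p ≤ m * (1 - p) := by
    rw [Nat.cast_sub (by omega)]
    nlinarith
  simp only [bernsteinPolynomial, eval_mul, eval_pow, eval_sub, eval_one, eval_X, eval_natCast]
  rw [show 2 * p - (p - v) = p + v by ring, show 1 - (p - v) = 1 - p + v by ring,
    show 1 - (p + v) = 1 - p - v by ring, mul_assoc, mul_assoc]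
  exact mul_le_mul_of_nonneg_left
    (sub_pow_mul_add_pow_le_add_pow_mul_sub_pow hv0.le hvp (by linarith) hbc) (Nat.cast_nonneg _)

theorem half_le_sum_eval_of_two_mul_le {n m : ℕ} {p : ℝ} (hn : 0 < n) (h : 2 * m ≤ n)
    (hp : n * p = m) :
    1 / 2 ≤ ∑ k ∈ range (m + 1), (bernsteinPolynomial ℝ n k).eval p := by
  obtain ⟨N, rfl⟩ : ∃ N, n = N + 1 := ⟨n - 1, by omega⟩
  push_cast at hp
  have hp0 : 0 ≤ p := by nlinarith
  have h2p : 2 * p ≤ 1 := by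
    have : (2 * m : ℝ) ≤ N + 1 := by exact_mod_cast h
    nlinarith
  have hreflect : ∫ t in 0..p, (bernsteinPolynomial ℝ N m).eval t ≤
      ∫ t in p..1, (bernsteinPolynomial ℝ N m).eval t :=
    integral_le_integral_of_le_reflect (Polynomial.continuous _) hp0 (by linarith)
      (fun u hu => eval_le_eval_two_mul_sub h hp hu)
      (fun u hu => eval_nonneg (by linarith [hu.1]) hu.2)
  have hlower := eval_sum_range_sub_eval (N + 1) m 0 p
  have hupper := eval_sum_range_sub_eval (N + 1) m p 1
  rw [eval_zero_sum_range] at hlower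
  rw [eval_one_sum_range ℝ (by omega)] at hupper
  simp only [Nat.add_sub_cancel, Nat.cast_add, Nat.cast_one] at hlower hupper
  rw [← eval_finsetSum]
  linarith [mul_le_mul_of_nonneg_left hreflect (by positivity : (0 : ℝ) ≤ N + 1)]

theorem eval_succ_mul {n k : ℕ} (hk : k < n) (p : ℝ) :
    (bernsteinPolynomial ℝ n (k + 1)).eval p * ((k + 1) * (1 - p)) =
      (bernsteinPolynomial ℝ n k).eval p * ((n - k) * p) := by
  obtain ⟨r, rfl⟩ : ∃ r, n = k + 1 + r := ⟨n - (k + 1), by omega⟩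
  have hchoose : ((k + 1 + r).choose (k + 1) : ℝ) * (k + 1) =
      (k + 1 + r).choose k * (r + 1) := by
    have := Nat.choose_succ_right_eq (k + 1 + r) k
    rw [show k + 1 + r - k = r + 1 by omega] at this
    exact_mod_cast this
  simp only [bernsteinPolynomial, eval_mul, eval_pow, eval_sub, eval_one, eval_X, eval_natCast]
  rw [show k + 1 + r - (k + 1) = r by omega, show k + 1 + r - k = r + 1 by omega]
  push_cast
  linear_combination p ^ (k + 1) * (1 - p) ^ (r + 1) * hchoose

theorem eval_le_of_add_eq {n m : ℕ} {p : ℝ} (h : n ≤ 2 * m) (hp : n * p = m) {i k : ℕ}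
    (hik : k + i = m) (hi : m + 1 + i ≤ n) :
    (bernsteinPolynomial ℝ n (m + 1 + i)).eval p ≤ (bernsteinPolynomial ℝ n k).eval p := by
  have hn : (0 : ℝ) < n := by exact_mod_cast (show 0 < n by omega)
  have hp' : p = m / n := by field_simp; linarith
  have hp1 : 0 < 1 - p := by
    rw [hp', sub_pos, div_lt_one hn]; exact_mod_cast (show m < n by omega)
  have hp0 : 0 ≤ p := by rw [hp']; positivity
  induction i generalizing k with
  | zero =>
    obtain rfl : k = m := by omega
    have hb := eval_nonneg (n := n) (k := k) hp0 (by linarith)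
    have hmul : (bernsteinPolynomial ℝ n (k + 1)).eval p * ((k + 1) * (1 - p)) ≤
        (bernsteinPolynomial ℝ n k).eval p * ((k + 1) * (1 - p)) := by
      rw [eval_succ_mul (by omega)]
      refine mul_le_mul_of_nonneg_left ?_ hb
      nlinarith
    exact le_of_mul_le_mul_right hmul (by positivity)
  | succ i ih =>
    have hk : (k : ℝ) + i + 1 = m := by exact_mod_cast (show k + i + 1 = m by omega)
    have hin : (m : ℝ) + 1 + i + 1 ≤ n := by exact_mod_cast hi
    have h2m : (n : ℝ) ≤ 2 * m := by exact_mod_cast h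
    have hup := eval_succ_mul (show m + 1 + i < n by omega) p
    have hlow := eval_succ_mul (show k < n by omega) p
    have hpair := ih (k := k + 1) (by omega) (by omega)
    have hb := eval_nonneg (n := n) (k := k) hp0 (by linarith)
    set α : ℝ := ((m + 1 + i : ℕ) + 1) * (1 - p)
    set β : ℝ := (k + 1) * (1 - p)
    set γ : ℝ := (n - (m + 1 + i : ℕ)) * p
    set δ : ℝ := (n - k) * p
    have hγ : 0 ≤ γ := mul_nonneg (by push_cast; linarith) hp0
    -- With `A = n - m` and `s = i + 1` this reads
    -- `(A - s)(A + s)m² ≤ (m + 1 + s)(m + 1 - s)A²`, the gap being `(2m + 1)A² + s²(m² - A²)`.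
    have hcross : γ * δ ≤ α * β := by
      simp only [α, β, γ, δ]
      rw [hp', one_sub_div hn.ne', show (k : ℝ) = m - i - 1 by linarith]
      push_cast
      field_simp
      nlinarith [mul_nonneg (mul_nonneg (sq_nonneg ((i : ℝ) + 1))
        (by linarith : (0 : ℝ) ≤ 2 * m - n)) hn.le,
        mul_nonneg (by positivity : (0 : ℝ) ≤ 2 * m + 1) (sq_nonneg ((n : ℝ) - m))]
    have hmul : (bernsteinPolynomial ℝ n (m + 1 + i + 1)).eval p * (α * β) ≤
        (bernsteinPolynomial ℝ n k).eval p * (α * β) :=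
      calc (bernsteinPolynomial ℝ n (m + 1 + i + 1)).eval p * (α * β)
          = (bernsteinPolynomial ℝ n (m + 1 + i)).eval p * γ * β := by rw [← mul_assoc, hup]
        _ ≤ (bernsteinPolynomial ℝ n (k + 1)).eval p * β * γ := by
          rw [mul_right_comm]; gcongr
        _ = (bernsteinPolynomial ℝ n k).eval p * (γ * δ) := by rw [hlow]; ring
        _ ≤ (bernsteinPolynomial ℝ n k).eval p * (α * β) :=
          mul_le_mul_of_nonneg_left hcross hb
    exact le_of_mul_le_mul_right hmul (by positivity)

theorem half_le_sum_eval_of_le_two_mul {n m : ℕ} {p : ℝ} (hp0 : 0 ≤ p) (hp1 : p ≤ 1)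
    (h : n ≤ 2 * m) (hp : n * p = m) :
    1 / 2 ≤ ∑ k ∈ range (m + 1), (bernsteinPolynomial ℝ n k).eval p := by
  have hmn : m ≤ n := by
    have : (m : ℝ) ≤ n := by rw [← hp]; nlinarith [Nat.cast_nonneg (α := ℝ) n]
    exact_mod_cast this
  set b : ℕ → ℝ := fun k => (bernsteinPolynomial ℝ n k).eval p
  have htotal : ∑ k ∈ range (m + 1), b k + ∑ j ∈ range (n - m), b (m + 1 + j) = 1 := by
    rw [← sum_range_add, show m + 1 + (n - m) = n + 1 by omega]
    simpa [b, eval_finsetSum] using congrArg (eval p) (bernsteinPolynomial.sum ℝ n)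
  have htail : ∑ j ∈ range (n - m), b (m + 1 + j) ≤ ∑ k ∈ range (m + 1), b k :=
    calc ∑ j ∈ range (n - m), b (m + 1 + j)
        ≤ ∑ j ∈ range (n - m), b (m - j) := sum_le_sum fun j hj => by
          rw [Finset.mem_range] at hj
          exact eval_le_of_add_eq h hp (Nat.sub_add_cancel (by omega)) (by omega)
      _ ≤ ∑ j ∈ range (m + 1), b (m - j) :=
          sum_le_sum_of_subset_of_nonneg (range_subset_range.2 (by omega))
            fun _ _ _ => eval_nonneg hp0 hp1
      _ = ∑ k ∈ range (m + 1), b k := by simpa using sum_range_reflect b (m + 1)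
  linarith

theorem half_le_sum_eval {n m : ℕ} {p : ℝ} (hp0 : 0 ≤ p) (hp1 : p ≤ 1) (hp : n * p = m) :
    1 / 2 ≤ ∑ k ∈ range (m + 1), (bernsteinPolynomial ℝ n k).eval p := by
  rcases le_or_gt n (2 * m) with h | h
  · exact half_le_sum_eval_of_le_two_mul hp0 hp1 h hp
  · exact half_le_sum_eval_of_two_mul_le (by omega) h.le hp

end bernsteinPolynomial

theorem PMF.binomial_toMeasure_setOf_le (p : NNReal) (hp : p ≤ 1) {n m : ℕ} (hmn : m ≤ n) :
    (PMF.binomial p hp n).toMeasure {k | (k : ℕ) ≤ m} =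
      ENNReal.ofReal (∑ k ∈ range (m + 1), (bernsteinPolynomial ℝ n k).eval (p : ℝ)) := by
  set b : ℕ → ENNReal := fun k => ENNReal.ofReal ((bernsteinPolynomial ℝ n k).eval (p : ℝ))
  have hterm : ∀ x : Fin (n + 1),
      {k : Fin (n + 1) | (k : ℕ) ≤ m}.indicator (PMF.binomial p hp n) x =
        if (x : ℕ) ≤ m then b x else 0 := by
    intro x
    simp only [Set.indicator_apply, Set.mem_setOf_eq]
    split_ifs
    · convert (PMF.binomial_apply_of_le x.is_le hp).symm using 2
      · simp
      · simp [bernsteinPolynomial]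
    · rfl
  rw [PMF.toMeasure_apply_fintype, Fintype.sum_congr _ _ hterm,
    Fin.sum_univ_eq_sum_range (fun k => if k ≤ m then b k else 0), ← sum_filter,
    show (range (n + 1)).filter (· ≤ m) = range (m + 1) by ext; simp; omega]
  exact (ENNReal.ofReal_sum_of_nonneg fun k _ =>
    bernsteinPolynomial.eval_nonneg p.2 (by exact_mod_cast hp)).symm

/-- If `X ~ Bin(n, q)` with `n·q` an integer `m`, then `Pr(X ≤ m) ≥ 1/2`
(an integer mean of a binomial is a median). -/
theorem binomial_le_mean_ge_half (q : ENNReal) (hq : q ≤ 1) (n m : ℕ)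
    (hm : (m : ENNReal) = n * q) :
    (1 / 2 : ENNReal) ≤ (PMF.binomial q.toNNReal (by simpa using ENNReal.toNNReal_mono ENNReal.one_ne_top hq) n).toMeasure {k | (k : ℕ) ≤ m} := by
  have hp1 : q.toNNReal ≤ 1 := by simpa using ENNReal.toNNReal_mono ENNReal.one_ne_top hq
  have hpn : (n : ℝ) * q.toNNReal = m := by
    rw [ENNReal.coe_toNNReal_eq_toReal]
    simpa using (congrArg ENNReal.toReal hm).symm
  have hmn : m ≤ n := by
    have : (m : ENNReal) ≤ n := hm ▸ mul_le_of_le_one_right' hq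
    exact_mod_cast this
  refine le_of_le_of_eq ?_ (PMF.binomial_toMeasure_setOf_le _ _ hmn).symm
  rw [show (1 / 2 : ENNReal) = ENNReal.ofReal (1 / 2) by simp]
  exact ENNReal.ofReal_le_ofReal
    (bernsteinPolynomial.half_le_sum_eval q.toNNReal.2 (by exact_mod_cast hp1) hpn)
end
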